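/- arXiv:1807.09897 — 2 statements merged into one kernel-verified Lean document; each statement's English description precedes it below -/
import Mathlib

section
/- Let N ≥ 1 be an integer, θ ∈ (0,1], r > 0, and let ξ be a binomial random variable with parameters N and θ. Then E[(max(ξ,1))^{−r}] ≤ (Nθ/2)^{−r} + exp(−Nθ/8). -/
/-- Inverse-moment estimate (eq. (7.4) of the paper): for `ξ ∼ Bin(N, θ)` and `r > 0`,
`E[(max(ξ,1))^{-r}] ≤ (Nθ/2)^{-r} + exp(-Nθ/8)`. -/
theorem stmt7 (N : ℕ) (hN : 1 ≤ N) (θ : ℝ) (hθ : θ ∈ Set.Ioc (0:ℝ) 1)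
    (r : ℝ) (hr : 0 < r) :
    ∑ k ∈ Finset.range (N + 1),
        (max (k : ℝ) 1) ^ (-r) * ((N.choose k : ℝ) * θ ^ k * (1 - θ) ^ (N - k))
      ≤ (N * θ / 2) ^ (-r) + Real.exp (-(N * θ) / 8) := by
  obtain ⟨hθ0, hθ1⟩ := hθ
  have hN1 : (1:ℝ) ≤ N := by exact_mod_cast hN
  have hNθ : 0 < (N:ℝ) * θ := mul_pos (by linarith) hθ0
  have ha : 0 < (N:ℝ) * θ / 2 := by linarith
  have h1θ : 0 ≤ 1 - θ := by linarith
  -- binomial theorem helper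
  have binom : ∀ c : ℝ, ∑ k ∈ Finset.range (N+1),
      c ^ k * ((N.choose k : ℝ) * θ ^ k * (1 - θ) ^ (N - k))
      = (c * θ + (1 - θ)) ^ N := by
    intro c
    rw [add_pow]
    apply Finset.sum_congr rfl
    intro k _
    rw [mul_pow]
    ring
  -- pointwise bound
  have key : ∀ k ∈ Finset.range (N+1),
      (max (k : ℝ) 1) ^ (-r) * ((N.choose k : ℝ) * θ ^ k * (1 - θ) ^ (N - k))
      ≤ (((N:ℝ) * θ / 2) ^ (-r) + (2:ℝ) ^ ((N:ℝ) * θ / 2) * ((1/2:ℝ)) ^ k)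
          * ((N.choose k : ℝ) * θ ^ k * (1 - θ) ^ (N - k)) := by
    intro k _
    have hpmf : 0 ≤ (N.choose k : ℝ) * θ ^ k * (1 - θ) ^ (N - k) := by positivity
    apply mul_le_mul_of_nonneg_right _ hpmf
    have hmax1 : (1:ℝ) ≤ max (k:ℝ) 1 := le_max_right _ _
    rcases le_or_gt ((N:ℝ) * θ / 2) k with hk | hk
    · -- k ≥ Nθ/2 : first term suffices
      have h1 : (max (k:ℝ) 1) ^ (-r) ≤ ((N:ℝ) * θ / 2) ^ (-r) := by
        apply Real.rpow_le_rpow_of_nonpos ha (le_trans hk (le_max_left _ _))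
        linarith
      have h2 : 0 ≤ (2:ℝ) ^ ((N:ℝ) * θ / 2) * ((1/2:ℝ)) ^ k := by positivity
      linarith
    · -- k < Nθ/2 : second term suffices
      have h1 : (max (k:ℝ) 1) ^ (-r) ≤ 1 :=
        Real.rpow_le_one_of_one_le_of_nonpos hmax1 (by linarith)
      have h2 : (1:ℝ) ≤ (2:ℝ) ^ ((N:ℝ) * θ / 2) * ((1/2:ℝ)) ^ k := by
        have e1 : ((1/2:ℝ)) ^ k = (2:ℝ) ^ (-(k:ℝ)) := by
          rw [Real.rpow_neg (by norm_num), Real.rpow_natCast, div_pow, one_pow, one_div]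
        rw [e1, ← Real.rpow_add (by norm_num)]
        have : (0:ℝ) ≤ (N:ℝ) * θ / 2 + -(k:ℝ) := by linarith
        calc (1:ℝ) = (2:ℝ) ^ (0:ℝ) := by norm_num
          _ ≤ (2:ℝ) ^ ((N:ℝ) * θ / 2 + -(k:ℝ)) :=
            Real.rpow_le_rpow_of_exponent_le (by norm_num) this
      have h3 : 0 ≤ ((N:ℝ) * θ / 2) ^ (-r) := Real.rpow_nonneg (le_of_lt ha) _
      linarith
  refine le_trans (Finset.sum_le_sum key) ?_
  have expand : ∑ k ∈ Finset.range (N+1),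
      (((N:ℝ) * θ / 2) ^ (-r) + (2:ℝ) ^ ((N:ℝ) * θ / 2) * ((1/2:ℝ)) ^ k)
        * ((N.choose k : ℝ) * θ ^ k * (1 - θ) ^ (N - k))
      = ((N:ℝ) * θ / 2) ^ (-r) * ((1:ℝ) * θ + (1 - θ)) ^ N
        + (2:ℝ) ^ ((N:ℝ) * θ / 2) * (((1/2:ℝ)) * θ + (1 - θ)) ^ N := by
    rw [← binom 1, ← binom (1/2), Finset.mul_sum, Finset.mul_sum, ← Finset.sum_add_distrib]
    apply Finset.sum_congr rfl
    intro k _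
    have : (1:ℝ) ^ k = 1 := one_pow k
    rw [this]
    ring
  rw [expand]
  have e1 : ((1:ℝ) * θ + (1 - θ)) ^ N = 1 := by norm_num
  rw [e1, mul_one]
  gcongr
  -- 2^(Nθ/2) * (1 - θ/2)^N ≤ exp(-Nθ/8)
  have e2 : ((1/2:ℝ)) * θ + (1 - θ) = 1 - θ/2 := by ring
  rw [e2]
  have h2 : (2:ℝ) ^ ((N:ℝ) * θ / 2) = Real.exp ((N:ℝ) * θ / 2 * Real.log 2) := by
    rw [Real.rpow_def_of_pos (by norm_num), mul_comm]
  have h3 : (1 - θ/2) ^ N ≤ Real.exp (-((N:ℝ) * θ / 2)) := by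
    have hb : 1 - θ/2 ≤ Real.exp (-(θ/2)) := by
      have := Real.add_one_le_exp (-(θ/2)); linarith
    calc (1 - θ/2) ^ N ≤ (Real.exp (-(θ/2))) ^ N :=
          pow_le_pow_left₀ (by linarith) hb N
      _ = Real.exp (-((N:ℝ) * θ / 2)) := by
          rw [← Real.exp_nat_mul]; ring_nf
  have h4 : 0 ≤ (1 - θ/2) ^ N := pow_nonneg (by linarith) N
  calc (2:ℝ) ^ ((N:ℝ) * θ / 2) * (1 - θ/2) ^ N
      ≤ Real.exp ((N:ℝ) * θ / 2 * Real.log 2) * Real.exp (-((N:ℝ) * θ / 2)) := by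
        rw [h2]; exact mul_le_mul_of_nonneg_left h3 (le_of_lt (Real.exp_pos _))
    _ = Real.exp ((N:ℝ) * θ / 2 * Real.log 2 - (N:ℝ) * θ / 2) := by
        rw [← Real.exp_add]; ring_nf
    _ ≤ Real.exp (-((N:ℝ) * θ) / 8) := by
        apply Real.exp_le_exp.mpr
        have hlog : Real.log 2 < 0.6931471808 := Real.log_two_lt_d9
        nlinarith [hNθ]
end

section
/- Let λ, κ, B̄ > 0, D̄ > 0, and r ≥ 0 be constants with r < D̄λ + κ. Define N(t) := λ/κ − (λ/κ − 1) e^{−κt}. Suppose m : [0,∞) → ℝ is differentiable with m'(t) = [r − D̄ κ N(t)] m(t) + (λ / N(t)) (B̄ − m(t)) for all t ≥ 0. Then m(t) → κ B̄ / (D̄ λ + κ − r) as t → ∞. -/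
/-!
Since `N t → λ/κ ≠ 0`, the equation reads `m' = -a(t) m + b(t)` with
`a = D̄ κ N - r + λ/N → D̄ λ + κ - r > 0` and `b = λ B̄ / N → κ B̄`. For such a linear equation
with asymptotically positive damping, every solution tends to `lim b / lim a`: above any level
`c > lim b / lim a` the drift is eventually negative, and an exponentially decaying barrier
`c + K e^{-γ t}` then traps the solution.
-/

open Filter Topology Set

section LinearODE

variable {f a b : ℝ → ℝ} {t₀ : ℝ}

/- The barrier `c + K e^{-γ (t - T)}`, `K = max (f T - c) 0`, cannot be crossed from below:
on it `f' = -a f + b < -a (f - c) ≤ -γ (f - c)`, which is its own slope. -/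
theorem eventually_lt_of_hasDerivWithinAt_neg_mul_add
    (hf : ∀ t ≥ t₀, HasDerivWithinAt f (-a t * f t + b t) (Ici t₀) t)
    {γ c c' : ℝ} (hγ : 0 < γ) (ha : ∀ᶠ t in atTop, γ ≤ a t)
    (hb : ∀ᶠ t in atTop, b t < a t * c) (hc : c < c') :
    ∀ᶠ t in atTop, f t < c' := by
  obtain ⟨T, hT⟩ := eventually_atTop.1 ((ha.and hb).and (eventually_ge_atTop t₀))
  set K := max (f T - c) 0
  set B : ℝ → ℝ := fun t => c + K * Real.exp (-γ * (t - T))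
  have hB : ∀ t, HasDerivAt B (-γ * (K * Real.exp (-γ * (t - T)))) t := fun t => by
    have := (((hasDerivAt_id t).sub_const T).const_mul (-γ)).exp.const_mul K |>.const_add c
    exact this.congr_deriv (by simp only [id]; ring)
  have hTt₀ : t₀ ≤ T := (hT T le_rfl).2
  have hfB_T : f T ≤ B T := by
    simp only [B, sub_self, mul_zero, Real.exp_zero, mul_one]
    linarith [le_max_left (f T - c) 0]
  have hfB : ∀ t ≥ T, f t ≤ B t := fun t ht => by
    have hf_Icc : ∀ x ∈ Icc T t, HasDerivWithinAt f (-a x * f x + b x) (Ici t₀) x :=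
      fun x hx => hf x (hTt₀.trans hx.1)
    refine image_le_of_deriv_right_lt_deriv_boundary
      (fun x hx => (hf_Icc x hx).continuousWithinAt.mono
        (Icc_subset_Ici_self.trans (Ici_subset_Ici.2 hTt₀)))
      (fun x hx => (hf_Icc x (Ico_subset_Icc_self hx)).mono (Ici_subset_Ici.2 (hTt₀.trans hx.1)))
      hfB_T hB (fun x hx hfx => ?_) ⟨ht, le_rfl⟩
    obtain ⟨⟨hax, hbx⟩, -⟩ := hT x hx.1
    have hK : 0 ≤ K * Real.exp (-γ * (x - T)) := by positivity
    rw [hfx]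
    nlinarith [mul_nonneg (sub_nonneg.2 hax) hK]
  have hB_lim : Tendsto B atTop (𝓝 c) := by
    have : Tendsto (fun t => -γ * (t - T)) atTop atBot :=
      (tendsto_atTop_add_const_right _ _ tendsto_id).const_mul_atTop_of_neg (neg_lt_zero.2 hγ)
    simpa [B] using (Real.tendsto_exp_comp_nhds_zero.2 this).const_mul K |>.const_add c
  filter_upwards [eventually_ge_atTop T, hB_lim.eventually_lt_const hc] with t ht hBt
  exact (hfB t ht).trans_lt hBt

theorem tendsto_of_hasDerivWithinAt_neg_mul_add
    (hf : ∀ t ≥ t₀, HasDerivWithinAt f (-a t * f t + b t) (Ici t₀) t)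
    {α β : ℝ} (hα : 0 < α) (ha : Tendsto a atTop (𝓝 α)) (hb : Tendsto b atTop (𝓝 β)) :
    Tendsto f atTop (𝓝 (β / α)) := by
  have ha_ge : ∀ᶠ t in atTop, α / 2 ≤ a t := ha.eventually_const_le (half_lt_self hα)
  refine tendsto_order.2 ⟨fun l hl => ?_, fun u hu => ?_⟩
  · obtain ⟨c, hlc, hc⟩ := exists_between hl
    have hf_neg : ∀ t ≥ t₀, HasDerivWithinAt (-f) (-a t * (-f) t + -b t) (Ici t₀) t :=
      fun t ht => (hf t ht).neg.congr_deriv (by simp only [Pi.neg_apply]; ring)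
    have hb_lt : ∀ᶠ t in atTop, -b t < a t * -c :=
      hb.neg.eventually_lt (ha.mul_const _) (by rw [lt_div_iff₀ hα] at hc; linarith)
    simpa using eventually_lt_of_hasDerivWithinAt_neg_mul_add hf_neg (half_pos hα) ha_ge hb_lt
      (neg_lt_neg hlc)
  · obtain ⟨c, hc, hcu⟩ := exists_between hu
    have hb_lt : ∀ᶠ t in atTop, b t < a t * c :=
      hb.eventually_lt (ha.mul_const _) (by rw [div_lt_iff₀ hα] at hc; linarith)
    exact eventually_lt_of_hasDerivWithinAt_neg_mul_add hf (half_pos hα) ha_ge hb_lt hcu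

end LinearODE

theorem tendsto_sub_mul_exp_neg_mul (A C : ℝ) {κ : ℝ} (hκ : 0 < κ) :
    Tendsto (fun t => A - C * Real.exp (-κ * t)) atTop (𝓝 A) := by
  have : Tendsto (fun t => -κ * t) atTop atBot :=
    tendsto_id.const_mul_atTop_of_neg (neg_lt_zero.2 hκ)
  simpa using ((Real.tendsto_exp_comp_nhds_zero.2 this).const_mul C).const_sub A

theorem stmt12_general (r lam κ Bbar Dbar : ℝ) (hlam : 0 < lam) (hκ : 0 < κ)
    (hrk : r < Dbar * lam + κ)
    (N m : ℝ → ℝ)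
    (hN : ∀ t, N t = lam / κ - (lam / κ - 1) * Real.exp (-κ * t))
    (hm : ∀ t ≥ (0:ℝ), HasDerivWithinAt m
      ((r - Dbar * κ * N t) * m t + (lam / N t) * (Bbar - m t)) (Set.Ici 0) t) :
    Tendsto m atTop (𝓝 (κ * Bbar / (Dbar * lam + κ - r))) := by
  have hN_lim : Tendsto N atTop (𝓝 (lam / κ)) := by
    simpa only [← hN] using tendsto_sub_mul_exp_neg_mul (lam / κ) (lam / κ - 1) hκ
  have hN_lim_ne : lam / κ ≠ 0 := by positivity
  have ha : Tendsto (fun t => Dbar * κ * N t - r + lam / N t) atTop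
      (𝓝 (Dbar * lam + κ - r)) := by
    rw [show Dbar * lam + κ - r = Dbar * κ * (lam / κ) - r + lam / (lam / κ) by field_simp; ring]
    exact ((hN_lim.const_mul (Dbar * κ)).sub_const r).add
      (tendsto_const_nhds.div hN_lim hN_lim_ne)
  have hb : Tendsto (fun t => lam * Bbar / N t) atTop (𝓝 (κ * Bbar)) := by
    rw [show κ * Bbar = lam * Bbar / (lam / κ) by field_simp]
    exact tendsto_const_nhds.div hN_lim hN_lim_ne
  exact tendsto_of_hasDerivWithinAt_neg_mul_add
    (fun t ht => (hm t ht).congr_deriv (by ring)) (by linarith) ha hb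

/-- Long-time limit of the mean bank reserves in the second scaling regime with constant
limiting parameters (Section 5 of the paper): with `N(t) = λ/κ - (λ/κ - 1) e^{-κt}`
and `m' = [r - D̄ κ N(t)] m + (λ/N(t))(B̄ - m)`, one has
`m(t) → κ B̄ / (D̄ λ + κ - r)` as `t → ∞`. -/
theorem stmt12 (r lam κ Bbar Dbar : ℝ) (hr : 0 ≤ r) (hlam : 0 < lam) (hκ : 0 < κ)
    (hB : 0 < Bbar) (hD : 0 < Dbar) (hrk : r < Dbar * lam + κ)
    (N m : ℝ → ℝ)
    (hN : ∀ t, N t = lam / κ - (lam / κ - 1) * Real.exp (-κ * t))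
    (hm : ∀ t ≥ (0:ℝ), HasDerivWithinAt m
      ((r - Dbar * κ * N t) * m t + (lam / N t) * (Bbar - m t)) (Set.Ici 0) t) :
    Tendsto m atTop (𝓝 (κ * Bbar / (Dbar * lam + κ - r))) :=
  stmt12_general r lam κ Bbar Dbar hlam hκ hrk N m hN hm
end
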